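/- Magnitude of finite Euclidean point sets is not submodular: let Ω = {(1,0),(0,1),(−1,0),(2,0)} ⊂ ℝ² with Euclidean distance, X = {(1,0),(0,1)}, x₁ = (−1,0), x₂ = (2,0), and define Mag(S) = 1ᵀ Z_S⁻¹ 1 where Z_S = exp[−d] is the similarity matrix of S at scale t = 1. Then Mag(X ∪ {x₁}) + Mag(X ∪ {x₂}) < Mag(X ∪ {x₁,x₂}) + Mag(X). -/

import Mathlib

open Matrix

/-- Magnitude of a finite tuple of points in ℝ² at scale t = 1: the sum of the
entries of the inverse of the similarity matrix `exp[-d]`. -/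
noncomputable def Mag {k : ℕ} (pts : Fin k → ℝ × ℝ) : ℝ :=
  ∑ i, ∑ j,
    (Matrix.of fun i j : Fin k =>
      Real.exp (-Real.sqrt (((pts i).1 - (pts j).1) ^ 2 + ((pts i).2 - (pts j).2) ^ 2)))⁻¹ i j

/-!
For symmetric invertible `Z` with weighting `w = Z⁻¹ 1`, the magnitude `∑ w` equals
`2 ∑ v - vᵀ Z v + eᵀ Z e` for every trial weighting `v`, where `e = w - v`. If `Z` is coercive,
`xᵀ Z x ≥ μ |x|²`, the last term lies between `0` and `|1 - Z v|² / μ`. The four similarity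
matrices are diagonally dominant, hence coercive by Gershgorin, so two-digit trial weightings
together with Taylor bounds for the entries `exp (-d)` bracket each magnitude to within about
`10⁻³`, while the submodularity defect is about `4 · 10⁻³`.
-/

open Real Set

namespace Matrix

variable {n : Type*} [Fintype n]

theorem dotProduct_self_nonneg (x : n → ℝ) : 0 ≤ x ⬝ᵥ x :=
  Fintype.sum_nonneg fun i => mul_self_nonneg (x i)

variable [DecidableEq n] {Z : Matrix n n ℝ} {μ : ℝ}

/-- Gershgorin's bound, with the diagonal entry counted in the row sum. -/
theorem mul_dotProduct_self_le_dotProduct_mulVec (hZ : Z.IsSymm)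
    (hrow : ∀ i, μ + ∑ j, |Z i j| ≤ 2 * Z i i) (x : n → ℝ) :
    μ * (x ⬝ᵥ x) ≤ x ⬝ᵥ (Z *ᵥ x) := by
  have hentry : ∀ i j, (if i = j then 2 * Z i i * x i ^ 2 else 0) -
      |Z i j| * (x i ^ 2 + x j ^ 2) / 2 ≤ x i * Z i j * x j := by
    intro i j
    split_ifs with hij
    · subst hij
      nlinarith [le_abs_self (Z i i), sq_nonneg (x i)]
    · nlinarith [abs_mul_abs_self (x i), abs_mul_abs_self (x j), abs_nonneg (Z i j),
        sq_nonneg (|x i| - |x j|), neg_abs_le (Z i j * (x i * x j)),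
        abs_mul (Z i j) (x i * x j), abs_mul (x i) (x j)]
  have hsymm : ∑ i, ∑ j, |Z i j| * (x i ^ 2 + x j ^ 2) / 2 = ∑ i, (∑ j, |Z i j|) * x i ^ 2 := by
    have hswap : ∑ i, ∑ j, |Z i j| * x j ^ 2 = ∑ i, ∑ j, |Z i j| * x i ^ 2 := by
      rw [Finset.sum_comm]
      simp_rw [hZ.apply]
    simp only [mul_add, add_div, Finset.sum_add_distrib, ← Finset.sum_div, hswap, Finset.sum_mul]
    ring
  calc μ * (x ⬝ᵥ x) = ∑ i, μ * x i ^ 2 := by simp [dotProduct, Finset.mul_sum, sq]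
    _ ≤ ∑ i, (2 * Z i i - ∑ j, |Z i j|) * x i ^ 2 := by
      gcongr with i
      linarith [hrow i]
    _ = ∑ i, ∑ j, ((if i = j then 2 * Z i i * x i ^ 2 else 0) -
          |Z i j| * (x i ^ 2 + x j ^ 2) / 2) := by
      simp only [Finset.sum_sub_distrib, Finset.sum_ite_eq, Finset.mem_univ, if_true, hsymm,
        sub_mul]
    _ ≤ ∑ i, ∑ j, x i * Z i j * x j := by
      gcongr with i _ j
      exact hentry i j
    _ = x ⬝ᵥ (Z *ᵥ x) := by simp [dotProduct, mulVec, Finset.mul_sum, mul_assoc]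

noncomputable def magnitude (Z : Matrix n n ℝ) : ℝ := ∑ i, ∑ j, Z⁻¹ i j

theorem isUnit_det_of_coercive (hμ : 0 < μ) (hcoer : ∀ x, μ * (x ⬝ᵥ x) ≤ x ⬝ᵥ (Z *ᵥ x)) :
    IsUnit Z.det := by
  rw [isUnit_iff_ne_zero]
  intro hdet
  obtain ⟨x, hx, hZx⟩ := exists_mulVec_eq_zero_iff.mpr hdet
  have hxx : x ⬝ᵥ x ≤ 0 := by
    have := hcoer x
    rw [hZx, dotProduct_zero] at this
    exact nonpos_of_mul_nonpos_right this hμ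
  exact hx (dotProduct_self_eq_zero.mp (le_antisymm hxx (dotProduct_self_nonneg x)))

theorem magnitude_eq_add_dotProduct_mulVec (hZ : Z.IsSymm) (hdet : IsUnit Z.det) (v : n → ℝ) :
    Z.magnitude =
      2 * ∑ i, v i - v ⬝ᵥ (Z *ᵥ v) + (Z⁻¹ *ᵥ 1 - v) ⬝ᵥ (Z *ᵥ (Z⁻¹ *ᵥ 1 - v)) := by
  set w := Z⁻¹ *ᵥ 1
  have hw : Z *ᵥ w = 1 := by rw [mulVec_mulVec, mul_nonsing_inv _ hdet, one_mulVec]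
  have hwZ : w ⬝ᵥ (Z *ᵥ v) = ∑ i, v i := by
    rw [dotProduct_mulVec, ← mulVec_transpose, hZ.eq, hw, one_dotProduct]
  have hmag : Z.magnitude = ∑ i, w i := by simp [magnitude, w, mulVec, dotProduct]
  rw [mulVec_sub, hw, dotProduct_sub, sub_dotProduct, sub_dotProduct, hwZ, dotProduct_one,
    dotProduct_one, hmag]
  ring

theorem two_mul_sum_sub_le_magnitude (hZ : Z.IsSymm) (hμ : 0 < μ)
    (hcoer : ∀ x, μ * (x ⬝ᵥ x) ≤ x ⬝ᵥ (Z *ᵥ x)) (v : n → ℝ) :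
    2 * ∑ i, v i - v ⬝ᵥ (Z *ᵥ v) ≤ Z.magnitude := by
  rw [magnitude_eq_add_dotProduct_mulVec hZ (isUnit_det_of_coercive hμ hcoer) v]
  nlinarith [hcoer (Z⁻¹ *ᵥ 1 - v), dotProduct_self_nonneg (Z⁻¹ *ᵥ 1 - v)]

theorem magnitude_le_two_mul_sum_sub_add (hZ : Z.IsSymm) (hμ : 0 < μ)
    (hcoer : ∀ x, μ * (x ⬝ᵥ x) ≤ x ⬝ᵥ (Z *ᵥ x)) (v : n → ℝ) {δ : ℝ}
    (hres : ∀ i, |1 - (Z *ᵥ v) i| ≤ δ) :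
    Z.magnitude ≤ 2 * ∑ i, v i - v ⬝ᵥ (Z *ᵥ v) + Fintype.card n * δ ^ 2 / μ := by
  have hdet := isUnit_det_of_coercive hμ hcoer
  rw [magnitude_eq_add_dotProduct_mulVec hZ hdet v]
  set e := Z⁻¹ *ᵥ 1 - v
  set r := 1 - Z *ᵥ v
  have hZe : Z *ᵥ e = r := by rw [mulVec_sub, mulVec_mulVec, mul_nonsing_inv _ hdet, one_mulVec]
  have hrr : r ⬝ᵥ r ≤ Fintype.card n * δ ^ 2 := by
    calc r ⬝ᵥ r = ∑ i, |r i| ^ 2 := by simp [dotProduct, sq]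
      _ ≤ ∑ _i : n, δ ^ 2 := by
        gcongr with i
        exact hres i
      _ = Fintype.card n * δ ^ 2 := by simp
  -- `2 μ (e ⬝ r) ≤ μ² (e ⬝ e) + r ⬝ r ≤ μ (e ⬝ r) + r ⬝ r`, the last step by coercivity
  have hamgm := dotProduct_self_nonneg (μ • e - r)
  simp only [sub_dotProduct, dotProduct_sub, smul_dotProduct, dotProduct_smul, smul_eq_mul,
    dotProduct_comm r e] at hamgm
  have hcoer_e := hcoer e
  rw [hZe] at hcoer_e ⊢
  have : e ⬝ᵥ r ≤ r ⬝ᵥ r / μ := by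
    rw [le_div_iff₀ hμ]
    nlinarith
  linarith [div_le_div_of_nonneg_right hrr hμ.le]

end Matrix

theorem exp_mem_Icc_of_mem_Icc {x lo hi : ℝ} (hx : x ∈ Icc lo hi) (hlo : |lo| ≤ 1)
    (hhi : |hi| ≤ 1) {n : ℕ} (hn : 0 < n) :
    exp x ∈ Icc
      (∑ m ∈ Finset.range n, lo ^ m / m.factorial - |lo| ^ n * (n.succ / (n.factorial * n)))
      (∑ m ∈ Finset.range n, hi ^ m / m.factorial + |hi| ^ n * (n.succ / (n.factorial * n))) := by
  have hl := (abs_le.mp (exp_bound hlo hn)).1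
  have hh := (abs_le.mp (exp_bound hhi hn)).2
  constructor
  · linarith [exp_le_exp.mpr hx.1]
  · linarith [exp_le_exp.mpr hx.2]

theorem exp_neg_one_mem_Icc : exp (-1) ∈ Icc (0.3678 : ℝ) 0.3679 := by
  constructor <;> linarith [exp_neg_one_gt_d9, exp_neg_one_lt_d9]

theorem exp_neg_two_mem_Icc : exp (-2) ∈ Icc (0.13533 : ℝ) 0.13534 := by
  rw [show (-2 : ℝ) = -1 + -1 by norm_num, exp_add]
  constructor <;> nlinarith [exp_neg_one_gt_d9, exp_neg_one_lt_d9]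

theorem exp_neg_three_mem_Icc : exp (-3) ∈ Icc (0.0497 : ℝ) 0.0498 := by
  rw [show (-3 : ℝ) = -1 + -1 + -1 by norm_num, exp_add, exp_add]
  constructor <;> nlinarith [exp_neg_one_gt_d9, exp_neg_one_lt_d9, exp_pos (-1)]

theorem exp_neg_sqrt_two_mem_Icc : exp (-√2) ∈ Icc (0.2431 : ℝ) 0.2432 := by
  have h₁ : (1.41421 : ℝ) ≤ √2 := (le_sqrt (by norm_num) (by norm_num)).mpr (by norm_num)
  have h₂ : √2 ≤ 1.41422 := (sqrt_le_left (by norm_num)).mpr (by norm_num)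
  obtain ⟨hlo, hhi⟩ := exp_mem_Icc_of_mem_Icc (x := 1 - √2) (lo := -0.41422) (hi := -0.41421)
    ⟨by linarith, by linarith⟩ (by norm_num [abs_le]) (by norm_num [abs_le]) (n := 7) (by norm_num)
  norm_num [Finset.sum_range_succ, Nat.factorial] at hlo hhi
  rw [show -√2 = -1 + (1 - √2) by ring, exp_add]
  constructor <;>
    nlinarith [exp_neg_one_gt_d9, exp_neg_one_lt_d9, exp_pos (-1), exp_pos (1 - √2)]

theorem exp_neg_sqrt_five_mem_Icc : exp (-√5) ∈ Icc (0.1068 : ℝ) 0.1069 := by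
  have h₁ : (2.23606 : ℝ) ≤ √5 := (le_sqrt (by norm_num) (by norm_num)).mpr (by norm_num)
  have h₂ : √5 ≤ 2.23607 := (sqrt_le_left (by norm_num)).mpr (by norm_num)
  obtain ⟨hlo, hhi⟩ := exp_mem_Icc_of_mem_Icc (x := 2 - √5) (lo := -0.23607) (hi := -0.23606)
    ⟨by linarith, by linarith⟩ (by norm_num [abs_le]) (by norm_num [abs_le]) (n := 7) (by norm_num)
  norm_num [Finset.sum_range_succ, Nat.factorial] at hlo hhi
  rw [show -√5 = -2 + (2 - √5) by ring, exp_add]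
  obtain ⟨h₃, h₄⟩ := exp_neg_two_mem_Icc
  constructor <;> nlinarith [exp_pos (-2), exp_pos (2 - √5)]

/- The similarity matrices of `X ∪ {x₁}`, `X ∪ {x₂}`, `X ∪ {x₁, x₂}` and `X`, where `a, b, c, d, e`
stand for `exp (-√2), exp (-2), exp (-1), exp (-3), exp (-√5)`. -/

theorem magnitude_X_x₁_le {a b : ℝ} (ha : a ∈ Icc (0.2431 : ℝ) 0.2432)
    (hb : b ∈ Icc (0.13533 : ℝ) 0.13534) :
    magnitude !![1, a, b; a, 1, a; b, a, 1] ≤ 2.127 := by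
  obtain ⟨ha₁, ha₂⟩ := ha
  obtain ⟨hb₁, hb₂⟩ := hb
  have hsymm : (!![1, a, b; a, 1, a; b, a, 1] : Matrix (Fin 3) (Fin 3) ℝ).IsSymm := by
    ext i j; fin_cases i <;> fin_cases j <;> rfl
  have hcoer := mul_dotProduct_self_le_dotProduct_mulVec hsymm (μ := 1 / 2) (by
    intro i
    fin_cases i <;>
      simp [Fin.sum_univ_three, abs_of_pos (show 0 < a by linarith),
        abs_of_pos (show 0 < b by linarith)] <;>
      linarith)
  refine (magnitude_le_two_mul_sum_sub_add hsymm (by norm_num) hcoer ![0.74, 0.64, 0.74]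
    (δ := 0.005) ?_).trans ?_
  · intro i
    fin_cases i <;> simp [mulVec, dotProduct, Fin.sum_univ_three, abs_le] <;> constructor <;>
      linarith
  · simp [mulVec, dotProduct, Fin.sum_univ_three]
    linarith

theorem magnitude_X_x₂_le {a c e : ℝ} (ha : a ∈ Icc (0.2431 : ℝ) 0.2432)
    (hc : c ∈ Icc (0.3678 : ℝ) 0.3679) (he : e ∈ Icc (0.1068 : ℝ) 0.1069) :
    magnitude !![1, a, c; a, 1, e; c, e, 1] ≤ 2.052 := by
  obtain ⟨ha₁, ha₂⟩ := ha
  obtain ⟨hc₁, hc₂⟩ := hc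
  obtain ⟨he₁, he₂⟩ := he
  have hsymm : (!![1, a, c; a, 1, e; c, e, 1] : Matrix (Fin 3) (Fin 3) ℝ).IsSymm := by
    ext i j; fin_cases i <;> fin_cases j <;> rfl
  have hcoer := mul_dotProduct_self_le_dotProduct_mulVec hsymm (μ := 1 / 3) (by
    intro i
    fin_cases i <;>
      simp [Fin.sum_univ_three, abs_of_pos (show 0 < a by linarith),
        abs_of_pos (show 0 < c by linarith), abs_of_pos (show 0 < e by linarith)] <;>
      linarith)
  refine (magnitude_le_two_mul_sum_sub_add hsymm (by norm_num) hcoer ![0.54, 0.79, 0.72]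
    (δ := 0.004) ?_).trans ?_
  · intro i
    fin_cases i <;> simp [mulVec, dotProduct, Fin.sum_univ_three, abs_le] <;> constructor <;>
      linarith
  · simp [mulVec, dotProduct, Fin.sum_univ_three]
    linarith

theorem le_magnitude_X_x₁_x₂ {a b c d e : ℝ} (ha : a ∈ Icc (0.2431 : ℝ) 0.2432)
    (hb : b ∈ Icc (0.13533 : ℝ) 0.13534) (hc : c ∈ Icc (0.3678 : ℝ) 0.3679)
    (hd : d ∈ Icc (0.0497 : ℝ) 0.0498) (he : e ∈ Icc (0.1068 : ℝ) 0.1069) :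
    2.572 ≤ magnitude !![1, a, b, c; a, 1, a, e; b, a, 1, d; c, e, d, 1] := by
  obtain ⟨ha₁, ha₂⟩ := ha
  obtain ⟨hb₁, hb₂⟩ := hb
  obtain ⟨hc₁, hc₂⟩ := hc
  obtain ⟨hd₁, hd₂⟩ := hd
  obtain ⟨he₁, he₂⟩ := he
  have hsymm : (!![1, a, b, c; a, 1, a, e; b, a, 1, d; c, e, d, 1] :
      Matrix (Fin 4) (Fin 4) ℝ).IsSymm := by
    ext i j; fin_cases i <;> fin_cases j <;> rfl
  have hcoer := mul_dotProduct_self_le_dotProduct_mulVec hsymm (μ := 1 / 4) (by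
    intro i
    fin_cases i <;>
      simp [Fin.sum_univ_four, abs_of_pos (show 0 < a by linarith),
        abs_of_pos (show 0 < b by linarith), abs_of_pos (show 0 < c by linarith),
        abs_of_pos (show 0 < d by linarith), abs_of_pos (show 0 < e by linarith)] <;>
      linarith)
  refine le_trans ?_
    (two_mul_sum_sub_le_magnitude hsymm (by norm_num) hcoer ![0.48, 0.62, 0.75, 0.72])
  simp [mulVec, dotProduct, Fin.sum_univ_four]
  linarith

theorem le_magnitude_X {a : ℝ} (ha : a ∈ Icc (0.2431 : ℝ) 0.2432) :
    1.608 ≤ magnitude !![1, a; a, 1] := by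
  obtain ⟨ha₁, ha₂⟩ := ha
  have hsymm : (!![1, a; a, 1] : Matrix (Fin 2) (Fin 2) ℝ).IsSymm := by
    ext i j; fin_cases i <;> fin_cases j <;> rfl
  have hcoer := mul_dotProduct_self_le_dotProduct_mulVec hsymm (μ := 1 / 2) (by
    intro i
    fin_cases i <;> simp [abs_of_pos (show 0 < a by linarith)] <;> linarith)
  refine le_trans ?_ (two_mul_sum_sub_le_magnitude hsymm (by norm_num) hcoer ![0.8, 0.8])
  simp [mulVec, dotProduct]
  linarith

theorem Mag_eq_magnitude {k : ℕ} (pts : Fin k → ℝ × ℝ) {Z : Matrix (Fin k) (Fin k) ℝ}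
    (hZ : ∀ i j, exp (-√(((pts i).1 - (pts j).1) ^ 2 + ((pts i).2 - (pts j).2) ^ 2)) = Z i j) :
    Mag pts = Z.magnitude := by
  obtain rfl : of (fun i j => exp (-√(((pts i).1 - (pts j).1) ^ 2 +
      ((pts i).2 - (pts j).2) ^ 2))) = Z := ext hZ
  rfl

/-- Magnitude is not submodular on finite Euclidean point sets:
`Mag(X ∪ {x₁}) + Mag(X ∪ {x₂}) < Mag(X ∪ {x₁, x₂}) + Mag(X)` for
`X = {(1,0),(0,1)}`, `x₁ = (-1,0)`, `x₂ = (2,0)`. -/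
theorem stmt4 :
    Mag ![((1 : ℝ), (0 : ℝ)), (0, 1), (-1, 0)] + Mag ![((1 : ℝ), (0 : ℝ)), (0, 1), (2, 0)] <
      Mag ![((1 : ℝ), (0 : ℝ)), (0, 1), (-1, 0), (2, 0)] + Mag ![((1 : ℝ), (0 : ℝ)), (0, 1)] := by
  have ha := exp_neg_sqrt_two_mem_Icc
  have hb := exp_neg_two_mem_Icc
  have hc := exp_neg_one_mem_Icc
  have hd := exp_neg_three_mem_Icc
  have he := exp_neg_sqrt_five_mem_Icc
  rw [Mag_eq_magnitude _ (Z := !![1, exp (-√2), exp (-2); exp (-√2), 1, exp (-√2);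
        exp (-2), exp (-√2), 1]) (fun i j => by fin_cases i <;> fin_cases j <;> norm_num),
    Mag_eq_magnitude _ (Z := !![1, exp (-√2), exp (-1); exp (-√2), 1, exp (-√5);
        exp (-1), exp (-√5), 1]) (fun i j => by fin_cases i <;> fin_cases j <;> norm_num),
    Mag_eq_magnitude _ (Z := !![1, exp (-√2), exp (-2), exp (-1);
        exp (-√2), 1, exp (-√2), exp (-√5); exp (-2), exp (-√2), 1, exp (-3);
        exp (-1), exp (-√5), exp (-3), 1])
      (fun i j => by fin_cases i <;> fin_cases j <;> norm_num),
    Mag_eq_magnitude _ (Z := !![1, exp (-√2); exp (-√2), 1])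
      (fun i j => by fin_cases i <;> fin_cases j <;> norm_num)]
  linarith [magnitude_X_x₁_le ha hb, magnitude_X_x₂_le ha hc he,
    le_magnitude_X_x₁_x₂ ha hb hc hd he, le_magnitude_X ha]
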